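/- arXiv:2109.04428 — 4 statements merged into one kernel-verified Lean document; each statement's English description precedes it below -/
import Mathlib

section
/- The function f(μ) = (1/μ)·ln(1-μ) is concave on (0,1). -/
open Set Real

-- g x = (3x²-2x)/(1-x)² - 2 log(1-x), auxiliary function whose monotonicity
-- yields the key log inequality.
private noncomputable def auxg : ℝ → ℝ := fun x => (3*x^2 - 2*x)/(1-x)^2 - 2*Real.log (1-x)

private lemma hasDerivAt_auxg {x : ℝ} (hx : x < 1) :
    HasDerivAt auxg (2*x^2/(1-x)^3) x := by
  have h1x : (1:ℝ) - x ≠ 0 := by intro h; nlinarith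
  have hlin : HasDerivAt (fun μ : ℝ => 1 - μ) (-1) x := by
    simpa using (hasDerivAt_id x).const_sub 1
  have hlog : HasDerivAt (fun μ : ℝ => Real.log (1 - μ)) ((1-x)⁻¹ * (-1)) x :=
    (Real.hasDerivAt_log h1x).comp x hlin
  have hnum : HasDerivAt (fun μ : ℝ => 3*μ^2 - 2*μ) (3*(2*x) - 2) x := by
    have h1 : HasDerivAt (fun μ : ℝ => μ^2) (2*x) x := by simpa using hasDerivAt_pow 2 x
    exact ((h1.const_mul 3).sub ((hasDerivAt_id x).const_mul 2)).congr_deriv (by ring)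
  have hden : HasDerivAt (fun μ : ℝ => (1-μ)^2) (2*(1-x)*(-1)) x := by
    exact ((hasDerivAt_pow 2 (1-x)).comp x hlin).congr_deriv (by norm_num)
  have hden' : (1-x)^2 ≠ 0 := pow_ne_zero _ h1x
  have hdiv := hnum.div hden hden'
  have := hdiv.sub (hlog.const_mul 2)
  refine this.congr_deriv ?_
  field_simp
  ring

private lemma key_ineq {x : ℝ} (hx : x ∈ Set.Ioo (0:ℝ) 1) :
    2 * Real.log (1 - x) ≤ (3*x^2 - 2*x)/(1-x)^2 := by
  have hmono : MonotoneOn auxg (Set.Ico 0 1) := by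
    apply monotoneOn_of_deriv_nonneg (convex_Ico 0 1)
    · intro y hy
      exact (hasDerivAt_auxg hy.2).continuousAt.continuousWithinAt
    · rw [interior_Ico]
      intro y hy
      exact (hasDerivAt_auxg hy.2).differentiableAt.differentiableWithinAt
    · rw [interior_Ico]
      intro y hy
      rw [(hasDerivAt_auxg hy.2).deriv]
      have h1 : (0:ℝ) < 1 - y := by linarith [hy.2]
      positivity
  have h0 : auxg 0 = 0 := by simp [auxg]
  have hle : auxg 0 ≤ auxg x :=
    hmono ⟨le_refl 0, one_pos⟩ ⟨hx.1.le, hx.2⟩ hx.1.le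
  rw [h0] at hle
  unfold auxg at hle
  linarith

-- first derivative of f on (0,1)
private lemma hasDerivAt_f1 {x : ℝ} (hx : x ∈ Set.Ioo (0:ℝ) 1) :
    HasDerivAt (fun μ : ℝ => (1 / μ) * Real.log (1 - μ))
      (-(Real.log (1 - x)) / x ^ 2 - 1 / (x * (1 - x))) x := by
  have hx0 : x ≠ 0 := ne_of_gt hx.1
  have h1x : (1:ℝ) - x ≠ 0 := by have := hx.2; intro h; nlinarith
  have hlin : HasDerivAt (fun μ : ℝ => 1 - μ) (-1) x := by
    simpa using (hasDerivAt_id x).const_sub 1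
  have hlog : HasDerivAt (fun μ : ℝ => Real.log (1 - μ)) ((1-x)⁻¹ * (-1)) x :=
    (Real.hasDerivAt_log h1x).comp x hlin
  have hinv : HasDerivAt (fun μ : ℝ => 1 / μ) (-(x^2)⁻¹) x := by
    simpa [one_div] using hasDerivAt_inv hx0
  have := hinv.mul hlog
  refine this.congr_deriv ?_
  field_simp
  ring

private noncomputable def auxF1 : ℝ → ℝ :=
  fun x => -(Real.log (1 - x)) / x ^ 2 - 1 / (x * (1 - x))

-- second derivative
private lemma hasDerivAt_auxF1 {x : ℝ} (hx : x ∈ Set.Ioo (0:ℝ) 1) :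
    HasDerivAt auxF1
      (2*Real.log (1-x)/x^3 + 2/(x^2*(1-x)) - 1/(x*(1-x)^2)) x := by
  have hx0 : x ≠ 0 := ne_of_gt hx.1
  have h1x : (1:ℝ) - x ≠ 0 := by have := hx.2; intro h; nlinarith
  have hlin : HasDerivAt (fun μ : ℝ => 1 - μ) (-1) x := by
    simpa using (hasDerivAt_id x).const_sub 1
  have hlog : HasDerivAt (fun μ : ℝ => Real.log (1 - μ)) ((1-x)⁻¹ * (-1)) x :=
    (Real.hasDerivAt_log h1x).comp x hlin
  have hsq : HasDerivAt (fun μ : ℝ => μ^2) (2*x) x := by simpa using hasDerivAt_pow 2 x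
  have h1 : HasDerivAt (fun μ : ℝ => -(Real.log (1-μ)) / μ^2) _ x :=
    hlog.neg.div hsq (pow_ne_zero 2 hx0)
  have hprod : HasDerivAt (fun μ : ℝ => μ * (1-μ)) (1*(1-x) + x*(-1)) x :=
    (hasDerivAt_id x).mul hlin
  have hprodne : x * (1-x) ≠ 0 := mul_ne_zero hx0 h1x
  have h2 : HasDerivAt (fun μ : ℝ => 1 / (μ * (1-μ))) _ x :=
    (hasDerivAt_const x (1:ℝ)).div hprod hprodne
  have := h1.sub h2
  refine this.congr_deriv ?_
  simp only [Pi.neg_apply]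
  field_simp
  ring

theorem stmt_11 :
    ConcaveOn ℝ (Set.Ioo 0 1) (fun μ : ℝ => (1 / μ) * Real.log (1 - μ)) := by
  have hD : Convex ℝ (Set.Ioo (0:ℝ) 1) := convex_Ioo 0 1
  set f : ℝ → ℝ := fun μ : ℝ => (1 / μ) * Real.log (1 - μ) with hf
  -- deriv f agrees with auxF1 on Ioo 0 1
  have hderiv : ∀ x ∈ Set.Ioo (0:ℝ) 1, deriv f x = auxF1 x := by
    intro x hx
    exact (hasDerivAt_f1 hx).deriv
  have hEv : ∀ x ∈ Set.Ioo (0:ℝ) 1, deriv f =ᶠ[nhds x] auxF1 := by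
    intro x hx
    filter_upwards [isOpen_Ioo.mem_nhds hx] with y hy
    exact hderiv y hy
  apply concaveOn_of_deriv2_nonpos hD
  · intro x hx
    exact (hasDerivAt_f1 hx).continuousAt.continuousWithinAt
  · rw [interior_Ioo]
    intro x hx
    exact (hasDerivAt_f1 hx).differentiableAt.differentiableWithinAt
  · rw [interior_Ioo]
    intro x hx
    have : DifferentiableAt ℝ (deriv f) x := by
      rw [(hEv x hx).differentiableAt_iff]
      exact (hasDerivAt_auxF1 hx).differentiableAt
    exact this.differentiableWithinAt
  · rw [interior_Ioo]
    intro x hx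
    have hx0 : (0:ℝ) < x := hx.1
    have h1x : (0:ℝ) < 1 - x := by linarith [hx.2]
    have heq : deriv^[2] f x = deriv auxF1 x := by
      simp only [Function.iterate_succ, Function.iterate_zero, Function.comp_apply, id]
      exact (hEv x hx).deriv_eq
    rw [heq, (hasDerivAt_auxF1 hx).deriv]
    have key := key_ineq hx
    have hrw : 2*Real.log (1-x)/x^3 + 2/(x^2*(1-x)) - 1/(x*(1-x)^2)
        = (2*Real.log (1-x) - (3*x^2 - 2*x)/(1-x)^2) / x^3 := by
      field_simp
      ring
    rw [hrw]
    apply div_nonpos_of_nonpos_of_nonneg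
    · linarith
    · positivity
end

section
/- Let K ≥ 2 and μ̄ ∈ (0,1). For all μ₁,...,μ_K ∈ (0, μ̄] with Σᵢ μᵢ ≤ 1, it holds that Σᵢ (1/μᵢ)·ln(1-μᵢ) ≥ (1/μ̄)·ln(1-μ̄) + (1/(1-μ̄))·ln(μ̄) - (K-2), provided μ̄ ≥ 1/2. -/
lemma aux_psi {u : ℝ} (h0 : 0 < u) (h1 : u ≤ 1) : u - 1/u ≤ 2 * Real.log u := by
  rcases eq_or_lt_of_le h1 with rfl | h1
  · simp
  set f : ℝ → ℝ := fun v => 2 * Real.log v - v + 1/v with hf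
  have key : AntitoneOn f (Set.Icc u 1) := by
    have hint : interior (Set.Icc u 1) = Set.Ioo u 1 := interior_Icc
    have hder : ∀ v ∈ Set.Ioo u 1, HasDerivAt f (2 * v⁻¹ - 1 + (-(v^2)⁻¹)) v := by
      intro v hv
      have hv0 : 0 < v := lt_trans h0 hv.1
      have : HasDerivAt (fun w : ℝ => 1/w) (-(v^2)⁻¹) v := by
        simpa using (hasDerivAt_inv (ne_of_gt hv0))
      exact (((Real.hasDerivAt_log (ne_of_gt hv0)).const_mul 2).sub (hasDerivAt_id v)).add this
    apply antitoneOn_of_deriv_nonpos (convex_Icc u 1)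
    · have : ContinuousOn (fun v : ℝ => 2 * Real.log v) (Set.Icc u 1) := by
        apply ContinuousOn.mul continuousOn_const
        apply Real.continuousOn_log.mono
        intro v hv; exact ne_of_gt (lt_of_lt_of_le h0 hv.1)
      exact (this.sub continuousOn_id).add (continuousOn_const.div continuousOn_id
        (fun v hv => ne_of_gt (lt_of_lt_of_le h0 hv.1)))
    · rw [hint]
      intro v hv
      exact (hder v hv).differentiableAt.differentiableWithinAt
    · rw [hint]
      intro v hv
      rw [(hder v hv).deriv]
      have hv0 : 0 < v := lt_trans h0 hv.1
      have h2 : (0:ℝ) < v^2 := by positivity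
      have : 2 * v⁻¹ - 1 + (-(v^2)⁻¹) = -(((v-1)/v)^2) := by
        field_simp
        ring
      rw [this]
      simp [sq_nonneg]
  have := key (Set.mem_Icc.2 ⟨le_refl u, le_of_lt h1⟩) (Set.mem_Icc.2 ⟨le_of_lt h1, le_refl 1⟩) (le_of_lt h1)
  simp only [hf, Real.log_one] at this
  linarith
lemma aux_h_anti {x y : ℝ} (hx : 0 < x) (hxy : x ≤ y) (hy : y < 1) :
    (Real.log (1-y) + y)/y^2 ≤ (Real.log (1-x) + x)/x^2 := by
  set f : ℝ → ℝ := fun t => (Real.log (1-t) + t)/t^2 with hf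
  have key : AntitoneOn f (Set.Icc x y) := by
    have hder : ∀ v ∈ Set.Ioo x y, HasDerivAt f
        (((-(1-v)⁻¹ + 1) * v^2 - (Real.log (1-v) + v) * (2*v)) / (v^2)^2) v := by
      intro v hv
      have hv0 : 0 < v := lt_trans hx hv.1
      have hv1 : v < 1 := lt_trans hv.2 hy
      have h1v : (0:ℝ) < 1 - v := by linarith
      have hlog : HasDerivAt (fun t : ℝ => Real.log (1-t)) (-(1-v)⁻¹) v := by
        have h1 : HasDerivAt (fun t : ℝ => 1 - t) (-1) v := (hasDerivAt_id v).const_sub 1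
        have := (Real.hasDerivAt_log (ne_of_gt h1v)).comp v h1
        exact this.congr_deriv (by ring)
      have hnum : HasDerivAt (fun t : ℝ => Real.log (1-t) + t) (-(1-v)⁻¹ + 1) v :=
        hlog.add (hasDerivAt_id v)
      have hden : HasDerivAt (fun t : ℝ => t^2) (2*v) v := by
        simpa using (hasDerivAt_pow 2 v)
      exact hnum.div hden (by positivity)
    apply antitoneOn_of_deriv_nonpos (convex_Icc x y)
    · apply ContinuousOn.div
      · apply ContinuousOn.add _ continuousOn_id
        apply (Real.continuousOn_log.comp (continuousOn_const.sub continuousOn_id) _)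
        intro v hv
        simp only [Set.mem_Icc] at hv
        have : v < 1 := lt_of_le_of_lt hv.2 hy
        simp only [Set.mem_compl_iff, Set.mem_singleton_iff]
        intro hc
        simp only [Pi.sub_apply, id] at hc
        linarith
      · exact continuousOn_pow 2
      · intro v hv
        have : 0 < v := lt_of_lt_of_le hx hv.1
        positivity
    · rw [interior_Icc]
      intro v hv
      exact (hder v hv).differentiableAt.differentiableWithinAt
    · rw [interior_Icc]
      intro v hv
      rw [(hder v hv).deriv]
      have hv0 : 0 < v := lt_trans hx hv.1
      have hv1 : v < 1 := lt_trans hv.2 hy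
      have h1v : (0:ℝ) < 1 - v := by linarith
      apply div_nonpos_of_nonpos_of_nonneg _ (by positivity)
      have hpsi : (1-v) - 1/(1-v) ≤ 2 * Real.log (1-v) := aux_psi h1v (by linarith)
      rw [one_div] at hpsi
      have hmul := mul_le_mul_of_nonneg_left hpsi hv0.le
      have e1v : (1-v)⁻¹ * (1-v) * v = v := by field_simp
      nlinarith [hmul, e1v]
  have h1 : x ∈ Set.Icc x y := Set.mem_Icc.2 ⟨le_refl x, hxy⟩
  have h2 : y ∈ Set.Icc x y := Set.mem_Icc.2 ⟨hxy, le_refl y⟩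
  exact key h1 h2 hxy

lemma aux_r {t : ℝ} (h1 : 1/2 ≤ t) (h2 : t < 1) :
    t^2 * Real.log t ≤ (1-t)^2 * Real.log (1-t) := by
  have ht0 : 0 < t := by linarith
  have h1t : (0:ℝ) < 1 - t := by linarith
  have h2t : (0:ℝ) ≤ 2*t - 1 := by linarith
  have hA : Real.log t ≤ t - 1 := Real.log_le_sub_one_of_pos ht0
  have hB : Real.log t - Real.log (1-t) ≤ t/(1-t) - 1 := by
    have h := Real.log_le_sub_one_of_pos (div_pos ht0 h1t)
    rwa [Real.log_div (ne_of_gt ht0) (ne_of_gt h1t)] at h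
  have e2 : (1-t)^2 * (t/(1-t)) = t*(1-t) := by
    field_simp
  nlinarith [mul_le_mul_of_nonneg_left hB (by positivity : (0:ℝ) ≤ (1-t)^2),
    mul_le_mul_of_nonneg_left hA h2t, e2]

lemma aux_C_anti {x y : ℝ} (hx : 1/2 ≤ x) (hxy : x ≤ y) (hy : y < 1) :
    Real.log (1-y)/y + Real.log y/(1-y) ≤ Real.log (1-x)/x + Real.log x/(1-x) := by
  set f : ℝ → ℝ := fun t => Real.log (1-t)/t + Real.log t/(1-t) with hf
  have key : AntitoneOn f (Set.Icc x y) := by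
    have hder : ∀ v ∈ Set.Ioo x y, HasDerivAt f
        ((v^2 * Real.log v - (1-v)^2 * Real.log (1-v))/(v^2*(1-v)^2)) v := by
      intro v hv
      have hv0 : 0 < v := by have := hv.1; linarith
      have hv1 : v < 1 := lt_trans hv.2 hy
      have h1v : (0:ℝ) < 1 - v := by linarith
      have hlog : HasDerivAt (fun t : ℝ => Real.log (1-t)) (-(1-v)⁻¹) v := by
        have h1 : HasDerivAt (fun t : ℝ => 1 - t) (-1) v := (hasDerivAt_id v).const_sub 1
        have := (Real.hasDerivAt_log (ne_of_gt h1v)).comp v h1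
        exact this.congr_deriv (by ring)
      have hone : HasDerivAt (fun t : ℝ => 1 - t) (-1) v := (hasDerivAt_id v).const_sub 1
      have hd1 : HasDerivAt (fun t : ℝ => Real.log (1-t)/t)
          ((-(1-v)⁻¹ * v - Real.log (1-v) * 1)/v^2) v :=
        hlog.div (hasDerivAt_id v) (ne_of_gt hv0)
      have hd2 : HasDerivAt (fun t : ℝ => Real.log t/(1-t))
          ((v⁻¹ * (1-v) - Real.log v * (-1))/(1-v)^2) v :=
        (Real.hasDerivAt_log (ne_of_gt hv0)).div hone (ne_of_gt h1v)
      have := hd1.add hd2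
      refine this.congr_deriv ?_
      field_simp
      ring
    apply antitoneOn_of_deriv_nonpos (convex_Icc x y)
    · apply ContinuousOn.add
      · apply ContinuousOn.div
        · apply (Real.continuousOn_log.comp (continuousOn_const.sub continuousOn_id) _)
          intro v hv
          simp only [Set.mem_Icc] at hv
          have hv1 : v < 1 := lt_of_le_of_lt hv.2 hy
          simp only [Set.mem_compl_iff, Set.mem_singleton_iff]
          intro hc
          simp only [Pi.sub_apply, id] at hc
          linarith
        · exact continuousOn_id
        · intro v hv
          have : 0 < v := by have := hv.1; linarith
          exact ne_of_gt this
      · apply ContinuousOn.div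
        · apply Real.continuousOn_log.mono
          intro v hv
          have : 0 < v := by have := hv.1; linarith
          exact ne_of_gt this
        · exact continuousOn_const.sub continuousOn_id
        · intro v hv
          have : v < 1 := lt_of_le_of_lt hv.2 hy
          intro hc
          linarith
    · rw [interior_Icc]
      intro v hv
      exact (hder v hv).differentiableAt.differentiableWithinAt
    · rw [interior_Icc]
      intro v hv
      rw [(hder v hv).deriv]
      have hv0 : 0 < v := by have := hv.1; linarith
      have hv1 : v < 1 := lt_trans hv.2 hy
      have h1v : (0:ℝ) < 1 - v := by linarith
      apply div_nonpos_of_nonpos_of_nonneg _ (by positivity)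
      have := aux_r (le_trans hx hv.1.le) hv1
      linarith
  exact key (Set.mem_Icc.2 ⟨le_refl x, hxy⟩) (Set.mem_Icc.2 ⟨hxy, le_refl y⟩) hxy

lemma aux_chord {x s : ℝ} (hx : 0 < x) (hxs : x ≤ s) (hs : s < 1) :
    -1 + ((Real.log (1-s) + s)/s^2) * x ≤ (1/x) * Real.log (1-x) := by
  have h := aux_h_anti hx hxs hs
  have e : (1/x) * Real.log (1-x) = -1 + ((Real.log (1-x) + x)/x^2) * x := by
    field_simp
    ring
  rw [e]
  have := mul_le_mul_of_nonneg_right h hx.le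
  linarith

theorem stmt_12 (K : ℕ) (hK : 2 ≤ K) (μbar : ℝ) (hμl : 1 / 2 ≤ μbar) (hμu : μbar < 1)
    (μ : Fin K → ℝ) (hpos : ∀ i, 0 < μ i) (hle : ∀ i, μ i ≤ μbar)
    (hsum : ∑ i, μ i ≤ 1) :
    (1 / μbar) * Real.log (1 - μbar) + (1 / (1 - μbar)) * Real.log μbar - (K - 2)
      ≤ ∑ i, (1 / μ i) * Real.log (1 - μ i) := by
  have hKpos : 0 < K := by omega
  obtain ⟨i0, -, hmax⟩ := Finset.exists_max_image Finset.univ μ ⟨⟨0, hKpos⟩, Finset.mem_univ _⟩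
  set M := μ i0 with hM
  have hM0 : 0 < M := hpos i0
  have hMt : M ≤ μbar := hle i0
  have hM1 : M < 1 := lt_of_le_of_lt hMt hμu
  have hbar0 : (0:ℝ) < μbar := by linarith
  have hbar1 : (0:ℝ) < 1 - μbar := by linarith
  have e1 : (1/μbar) * Real.log (1-μbar) = Real.log (1-μbar)/μbar := by ring
  have e2 : (1/(1-μbar)) * Real.log μbar = Real.log μbar/(1-μbar) := by ring
  rcases le_total M (1/2) with hMle | hMge
  · -- all coordinates ≤ 1/2 : use chord on [0,1/2]
    set c : ℝ := (Real.log (1-(1/2:ℝ)) + 1/2)/(1/2:ℝ)^2 with hc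
    have hchord : ∀ i ∈ Finset.univ, -1 + c * μ i ≤ (1/μ i) * Real.log (1 - μ i) :=
      fun i _ => aux_chord (hpos i) (le_trans (hmax i (Finset.mem_univ i)) hMle) (by norm_num)
    have h2 := Finset.sum_le_sum hchord
    have h3 : ∑ i : Fin K, (-1 + c * μ i) = -(K:ℝ) + c * ∑ i, μ i := by
      rw [Finset.sum_add_distrib, Finset.sum_const, ← Finset.mul_sum]
      simp [Finset.card_univ]
    have hlog2 : Real.log (1-(1/2:ℝ)) ≤ -1/2 := by
      rw [show (1:ℝ)-1/2 = 2⁻¹ by norm_num, Real.log_inv]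
      linarith [Real.log_two_gt_d9]
    have hc0 : c ≤ 0 := by
      rw [hc]
      apply div_nonpos_of_nonpos_of_nonneg _ (by positivity)
      linarith
    have h4 : c * 1 ≤ c * ∑ i, μ i := mul_le_mul_of_nonpos_left hsum hc0
    have hC := aux_C_anti (le_refl (1/2:ℝ)) hμl hμu
    have hc_eq : c = 4 * Real.log (1-(1/2:ℝ)) + 2 := by rw [hc]; ring
    have hCl : Real.log (1-(1/2:ℝ))/(1/2:ℝ) + Real.log (1/2:ℝ)/(1-(1/2:ℝ))
        = 4 * Real.log (1-(1/2:ℝ)) - 2 + 2 := by norm_num; ring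
    rw [e1, e2] at *
    linarith [h2, h3, h4, hC, hCl]
  · -- max coordinate M ≥ 1/2 : treat it separately
    set s : ℝ := 1 - M with hs
    have hs0 : 0 < s := by rw [hs]; linarith
    have hs1 : s < 1 := by rw [hs]; linarith
    have herase_eq : M + ∑ i ∈ Finset.univ.erase i0, μ i = ∑ i, μ i :=
      Finset.add_sum_erase Finset.univ μ (Finset.mem_univ i0)
    set S : ℝ := ∑ i ∈ Finset.univ.erase i0, μ i with hS
    have hSle : S ≤ s := by rw [hs]; linarith
    have hle_s : ∀ i ∈ Finset.univ.erase i0, μ i ≤ s := by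
      intro i hi
      have hiS : μ i ≤ S := Finset.single_le_sum (fun j _ => (hpos j).le) hi
      linarith
    set c : ℝ := (Real.log (1-s) + s)/s^2 with hc
    have hchord : ∀ i ∈ Finset.univ.erase i0, -1 + c * μ i ≤ (1/μ i) * Real.log (1 - μ i) :=
      fun i hi => aux_chord (hpos i) (hle_s i hi) hs1
    have h2 := Finset.sum_le_sum hchord
    have h3 : ∑ i ∈ Finset.univ.erase i0, (-1 + c * μ i) = -((K:ℝ) - 1) + c * S := by
      rw [Finset.sum_add_distrib, Finset.sum_const, ← Finset.mul_sum,
        Finset.card_erase_of_mem (Finset.mem_univ i0), Finset.card_univ, Fintype.card_fin]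
      simp only [nsmul_eq_mul]
      rw [Nat.cast_sub (by omega : 1 ≤ K)]
      push_cast
      ring
    have hlogM : Real.log (1-s) ≤ -s := by
      have := Real.log_le_sub_one_of_pos (show (0:ℝ) < 1 - s by linarith)
      linarith
    have hc0 : c ≤ 0 := by
      rw [hc]
      apply div_nonpos_of_nonpos_of_nonneg _ (by positivity)
      linarith
    have h4 : c * s ≤ c * S := mul_le_mul_of_nonpos_left hSle hc0
    have hcs_eq : c * s = Real.log (1-s)/s + 1 := by
      rw [hc]
      field_simp
    have hsplit : ∑ i, (1/μ i) * Real.log (1 - μ i)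
        = (1/M) * Real.log (1 - M) + ∑ i ∈ Finset.univ.erase i0, (1/μ i) * Real.log (1 - μ i) :=
      (Finset.add_sum_erase Finset.univ (fun i => (1/μ i) * Real.log (1 - μ i))
        (Finset.mem_univ i0)).symm
    have hC := aux_C_anti hMge hMt hμu
    have eM1 : (1:ℝ) - s = M := by rw [hs]; ring
    have eg0 : (1/M) * Real.log (1-M) = Real.log (1-M)/M := by ring
    rw [eM1] at hcs_eq
    rw [hs] at hcs_eq h4
    rw [e1, e2, hsplit, eg0]
    linarith [h2, h3, h4, hC, hcs_eq]
end

section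
/- For d ∈ (d_min, 1) where d_min is the smaller root of 2-2d+ln d, the function q(μ) := (1/μ)·((1-d)·μ - (1-d-ln(1/d))·ln(1-μ)) is decreasing in μ on (0, μ̄), where μ̄ = 2 + ln(d)/(1-d). -/
theorem stmt_15 (d : ℝ) (h0 : 0 < d) (h1 : d < 1) (hg : 0 < 2 - 2 * d + Real.log d) :
    StrictAntiOn
      (fun μ : ℝ => (1 / μ) * ((1 - d) * μ - (1 - d - Real.log (1 / d)) * Real.log (1 - μ)))
      (Set.Ioo 0 (2 + Real.log d / (1 - d))) := by
  have hd1 : (0:ℝ) < 1 - d := by linarith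
  have hlogd : Real.log d < d - 1 := Real.log_lt_sub_one_of_pos h0 (ne_of_lt h1)
  set c : ℝ := 1 - d - Real.log (1 / d) with hcdef
  have hc : c < 0 := by
    rw [hcdef, Real.log_div one_ne_zero (ne_of_gt h0), Real.log_one]
    linarith
  have hm1 : 2 + Real.log d / (1 - d) < 1 := by
    have : Real.log d / (1 - d) < -1 := by
      rw [div_lt_iff₀ hd1]; linarith
    linarith
  simp only [one_div]
  -- derivative at each point of the open interval
  have hD : ∀ x ∈ Set.Ioo (0:ℝ) (2 + Real.log d / (1 - d)),
      HasDerivAt (fun μ : ℝ => μ⁻¹ * ((1 - d) * μ - c * Real.log (1 - μ)))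
        (-(x^2)⁻¹ * ((1 - d) * x - c * Real.log (1 - x))
          + x⁻¹ * ((1 - d) - c * (-(1 - x)⁻¹))) x := by
    intro x hx
    have hx0 : x ≠ 0 := ne_of_gt hx.1
    have hx1 : x < 1 := lt_trans hx.2 hm1
    have h1x : (0:ℝ) < 1 - x := by linarith
    have h1x' : (1:ℝ) - x ≠ 0 := ne_of_gt h1x
    have hlog : HasDerivAt (fun μ : ℝ => Real.log (1 - μ)) (-(1 - x)⁻¹) x := by
      have h := (Real.hasDerivAt_log h1x').comp x ((hasDerivAt_id x).const_sub 1)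
      exact h.congr_deriv (by ring)
    have hglin : HasDerivAt (fun μ : ℝ => (1 - d) * μ - c * Real.log (1 - μ))
        ((1 - d) - c * (-(1 - x)⁻¹)) x := by
      have h := ((hasDerivAt_id x).const_mul (1 - d)).sub (hlog.const_mul c)
      exact h.congr_deriv (by ring)
    exact (hasDerivAt_inv hx0).mul hglin
  apply strictAntiOn_of_deriv_neg (convex_Ioo _ _)
  · exact fun x hx => ((hD x hx).continuousAt).continuousWithinAt
  · intro x hx
    rw [interior_Ioo] at hx
    have hx0 : (0:ℝ) < x := hx.1
    have hx1 : x < 1 := lt_trans hx.2 hm1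
    have h1x : (0:ℝ) < 1 - x := by linarith
    rw [(hD x hx).deriv]
    have hinv1 : (1:ℝ) < (1 - x)⁻¹ := (one_lt_inv₀ h1x).2 (by linarith)
    have hkey : 0 < x * (1 - x)⁻¹ + Real.log (1 - x) := by
      have h2 := Real.log_lt_sub_one_of_pos (by positivity : (0:ℝ) < (1 - x)⁻¹)
        (ne_of_gt hinv1)
      rw [Real.log_inv] at h2
      have hx' : x * (1 - x)⁻¹ = (1 - x)⁻¹ - 1 := by
        field_simp
        ring
      linarith
    have heq : -(x^2)⁻¹ * ((1 - d) * x - c * Real.log (1 - x))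
          + x⁻¹ * ((1 - d) - c * (-(1 - x)⁻¹))
        = c * (x * (1 - x)⁻¹ + Real.log (1 - x)) / x^2 := by
      field_simp
      ring
    rw [heq]
    exact div_neg_of_neg_of_pos (mul_neg_of_neg_of_pos hc hkey) (by positivity)
end

section
/- Let c = 0.47521, d = 0.60138 and μ̄ = 2 + ln(d)/(1-d). Then c·ln(d/c) + (c/d)·((1-d)·μ̄ + (1-d-ln(1/d))·ln(1/(1-μ̄)) - 2 + 2d + ln(1/d)) ≥ 0. -/
/-!
With `a = log (1/d) - (1 - d)` one has `1 - μ̄ = a / (1 - d)`, and the bracket collapses to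
`-a * log ((1 - d) / a)`. The claim becomes `a * log ((1 - d) / a) ≤ d * log (d / c)`, which holds
with a margin of about `5·10⁻⁶`. Both sides are bounded through the truncated Taylor series of
`log (1 - x)`, after factoring out powers of `2` so that `x` is small.
-/

open Real Finset

lemma log_one_sub_bounds (x : ℝ) (n : ℕ) (h0 : 0 ≤ x) (h1 : x < 1) :
    -(∑ i ∈ range n, x ^ (i + 1) / (i + 1)) - x ^ (n + 1) / (1 - x) ≤ log (1 - x) ∧
      log (1 - x) ≤ -(∑ i ∈ range n, x ^ (i + 1) / (i + 1)) + x ^ (n + 1) / (1 - x) := by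
  have h := abs_log_sub_add_sum_range_le (abs_lt.mpr ⟨by linarith, h1⟩) n
  rw [abs_of_nonneg h0] at h
  constructor <;> linarith [abs_le.mp h]

lemma log_bounds_0_60138 : -0.508529 < log 0.60138 ∧ log 0.60138 < -0.508528 := by
  rw [show (0.60138 : ℝ) = 2⁻¹ * (1 - 5069 / 30069)⁻¹ by norm_num,
    log_mul (by norm_num) (by norm_num), log_inv, log_inv]
  obtain ⟨h1, h2⟩ := log_one_sub_bounds (5069 / 30069) 8 (by norm_num) (by norm_num)
  norm_num [sum_range_succ] at h1 h2
  constructor <;> linarith [log_two_gt_d9, log_two_lt_d9]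

lemma log_0_60138_div_0_47521_gt : 0.235468 < log (0.60138 / 0.47521) := by
  rw [show (0.60138 / 0.47521 : ℝ) = (1 - 12617 / 60138)⁻¹ by norm_num, log_inv]
  obtain ⟨-, h⟩ := log_one_sub_bounds (12617 / 60138) 8 (by norm_num) (by norm_num)
  norm_num [sum_range_succ] at h
  linarith

lemma log_0_39862_div_0_109908_lt : log (0.39862 / 0.109908) < 1.28837 := by
  rw [show (0.39862 / 0.109908 : ℝ) = 2 ^ 2 * (1 - 10253 / 109908) by norm_num,
    log_mul (by norm_num) (by norm_num), log_pow]
  obtain ⟨-, h⟩ := log_one_sub_bounds (10253 / 109908) 5 (by norm_num) (by norm_num)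
  norm_num [sum_range_succ] at h ⊢
  linarith [log_two_lt_d9]

lemma bracket_eq_neg_mul_log_div (d μ : ℝ) (hd : d ≠ 1) (hμ : μ = 2 + log d / (1 - d)) :
    (1 - d) * μ + (1 - d - log (1 / d)) * log (1 / (1 - μ)) - 2 + 2 * d + log (1 / d) =
      -((log (1 / d) - (1 - d)) * log ((1 - d) / (log (1 / d) - (1 - d)))) := by
  have hs : 1 - d ≠ 0 := sub_ne_zero.mpr hd.symm
  have h1μ : 1 - μ = (log (1 / d) - (1 - d)) / (1 - d) := by
    rw [hμ, one_div, log_inv]; field_simp; ring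
  rw [h1μ, one_div_div, hμ, one_div, log_inv]
  field_simp
  ring

lemma mul_log_div_le {a b s t : ℝ} (ha : 0 < a) (hat : a ≤ t) (htb : t ≤ b) (hts : t ≤ s) :
    t * log (s / t) ≤ b * log (s / a) := by
  have ht : 0 < t := ha.trans_le hat
  have hst : 0 ≤ log (s / t) := log_nonneg ((one_le_div ht).mpr hts)
  have hlog : log (s / t) ≤ log (s / a) :=
    log_le_log (div_pos (ht.trans_le hts) ht) (div_le_div_of_nonneg_left (ht.le.trans hts) ha hat)
  exact mul_le_mul htb hlog hst (ht.le.trans htb)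

theorem stmt_18 :
    let c : ℝ := 0.47521
    let d : ℝ := 0.60138
    let μbar : ℝ := 2 + Real.log d / (1 - d)
    0 ≤ c * Real.log (d / c) + (c / d) * ((1 - d) * μbar
        + (1 - d - Real.log (1 / d)) * Real.log (1 / (1 - μbar))
        - 2 + 2 * d + Real.log (1 / d)) := by
  intro c d μbar
  rw [bracket_eq_neg_mul_log_div d μbar (by norm_num) rfl]
  set a := log (1 / d) - (1 - d)
  have ha : 0.109908 ≤ a ∧ a ≤ 0.109909 := by
    obtain ⟨h1, h2⟩ := log_bounds_0_60138
    simp only [a, d, one_div, log_inv]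
    constructor <;> linarith
  have key : a * log ((1 - d) / a) ≤ d * log (d / c) :=
    calc a * log ((1 - d) / a) ≤ 0.109909 * log (0.39862 / 0.109908) := by
          rw [show (1 : ℝ) - d = 0.39862 by norm_num]
          exact mul_log_div_le (by norm_num) ha.1 ha.2 (by linarith)
      _ ≤ 0.109909 * 1.28837 := by gcongr; exact log_0_39862_div_0_109908_lt.le
      _ ≤ 0.60138 * 0.235468 := by norm_num
      _ ≤ d * log (d / c) := by gcongr; exact log_0_60138_div_0_47521_gt.le
  calc (0 : ℝ) ≤ c / d * (d * log (d / c) - a * log ((1 - d) / a)) :=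
        mul_nonneg (by norm_num) (sub_nonneg.mpr key)
    _ = _ := by field_simp; ring
end
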